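/- The surface stiffness is strictly positive and given by the explicit formula: for every θ ∈ (0,π/2), τ is twice differentiable at θ and τ(θ) + τ″(θ) = sec³θ / (−ĝ″(ν(θ))) > 0. -/

import Mathlib

/-!
On `(0, ν₀)` the profile is `ĝ(ν) = arcosh (A - B cosh ν)`, and the saddle-point equation says
`-ĝ'(ν(θ)) = tan θ`. As `-ĝ'` is strictly increasing there, `ν` is its inverse composed with `tan`,
hence differentiable with `ν' = sec² θ / (-ĝ''(ν))`. The saddle-point equation also makes `τ` an
envelope: differentiating `τ = cos θ ĝ(ν) + sin θ ν`, the `ν'`-terms cancel, so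
`τ' = -sin θ ĝ(ν) + cos θ ν`, and differentiating once more gives `τ'' = -τ + ν' / cos θ`.
-/

open Real Set Filter Topology

theorem continuousOn_of_leftInvOn_of_strictMonoOn {α β : Type*} [LinearOrder α]
    [TopologicalSpace α] [OrderTopology α] [LinearOrder β] [TopologicalSpace β] [OrderTopology β]
    [DenselyOrdered β] {f : β → α} {g : α → β} {s : Set α} {t : Set β} (hs : IsOpen s)
    (ht : IsOpen t) (hf : StrictMonoOn f t) (hg : MapsTo g s t) (hgs : t ⊆ g '' s)
    (hfg : LeftInvOn f g s) : ContinuousOn g s := by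
  intro x hx
  refine (continuousAt_of_monotoneOn_of_image_mem_nhds ?_ (hs.mem_nhds hx)
    (mem_of_superset (ht.mem_nhds (hg hx)) hgs)).continuousWithinAt
  intro a ha b hb hab
  by_contra! hlt
  have := hf (hg hb) (hg ha) hlt
  rw [hfg ha, hfg hb] at this
  exact this.not_ge hab

theorem hasDerivAt_of_comp_eq_tan {H ν : ℝ → ℝ} {θ d : ℝ} (hν : ContinuousAt ν θ)
    (hH : HasDerivAt H d (ν θ)) (hd : d ≠ 0) (hθ : θ ∈ Ioo (-(π / 2)) (π / 2))
    (heq : ∀ᶠ θ' in 𝓝 θ, H (ν θ') = tan θ') :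
    HasDerivAt ν (1 / (d * cos θ ^ 2)) θ := by
  have hcos : 0 < cos θ := cos_pos_of_mem_Ioo hθ
  have hΘ : HasDerivAt (fun x => arctan (H x)) (d * cos θ ^ 2) (ν θ) := by
    refine hH.arctan.congr_deriv ?_
    rw [heq.self_of_nhds, one_div, inv_one_add_tan_sq hcos.ne', mul_comm]
  have hinv : ∀ᶠ θ' in 𝓝 θ, arctan (H (ν θ')) = θ' := by
    filter_upwards [heq, isOpen_Ioo.mem_nhds hθ] with θ' h hθ'
    rw [h, arctan_tan hθ'.1 hθ'.2]
  simpa only [one_div] using hΘ.of_local_left_inverse hν (by positivity) hinv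

section Envelope

variable {G ν : ℝ → ℝ} {θ ν' : ℝ}

theorem hasDerivAt_envelope (hG : HasDerivAt G (-tan θ) (ν θ)) (hν : HasDerivAt ν ν' θ)
    (hcos : cos θ ≠ 0) :
    HasDerivAt (fun θ => cos θ * G (ν θ) + sin θ * ν θ) (-sin θ * G (ν θ) + cos θ * ν θ) θ := by
  refine (((hasDerivAt_cos θ).mul (hG.comp θ hν)).add ((hasDerivAt_sin θ).mul hν)).congr_deriv ?_
  simp only [Function.comp_apply, tan_eq_sin_div_cos]
  field_simp
  ring

theorem hasDerivAt_envelope_deriv (hG : HasDerivAt G (-tan θ) (ν θ)) (hν : HasDerivAt ν ν' θ)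
    (hcos : cos θ ≠ 0) :
    HasDerivAt (fun θ => -sin θ * G (ν θ) + cos θ * ν θ)
      (-(cos θ * G (ν θ) + sin θ * ν θ) + ν' / cos θ) θ := by
  refine (((hasDerivAt_sin θ).neg.mul (hG.comp θ hν)).add
    ((hasDerivAt_cos θ).mul hν)).congr_deriv ?_
  simp only [Function.comp_apply, Pi.neg_apply, tan_eq_sin_div_cos]
  field_simp
  linear_combination ν' * sin_sq_add_cos_sq θ

theorem hasDerivAt_deriv_of_eqOn_envelope {τ ν' : ℝ → ℝ} {V : Set ℝ} (hV : IsOpen V)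
    (hcos : ∀ θ ∈ V, cos θ ≠ 0) (hG : ∀ θ ∈ V, HasDerivAt G (-tan θ) (ν θ))
    (hν : ∀ θ ∈ V, HasDerivAt ν (ν' θ) θ)
    (hτ : EqOn τ (fun θ => cos θ * G (ν θ) + sin θ * ν θ) V) (hθ : θ ∈ V) :
    HasDerivAt τ (-sin θ * G (ν θ) + cos θ * ν θ) θ ∧
      HasDerivAt (deriv τ) (-τ θ + ν' θ / cos θ) θ := by
  have hτ' : ∀ θ ∈ V, HasDerivAt τ (-sin θ * G (ν θ) + cos θ * ν θ) θ := fun θ hθ =>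
    (hasDerivAt_envelope (hG θ hθ) (hν θ hθ) (hcos θ hθ)).congr_of_eventuallyEq
      (eventuallyEq_of_mem (hV.mem_nhds hθ) hτ)
  have hderiv : deriv τ =ᶠ[𝓝 θ] fun θ => -sin θ * G (ν θ) + cos θ * ν θ :=
    eventuallyEq_of_mem (hV.mem_nhds hθ) fun θ hθ => (hτ' θ hθ).deriv
  refine ⟨hτ' θ hθ, ?_⟩
  rw [hτ hθ]
  exact (hasDerivAt_envelope_deriv (hG θ hθ) (hν θ hθ) (hcos θ hθ)).congr_of_eventuallyEq hderiv

end Envelope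

noncomputable def gHat (A B ν : ℝ) : ℝ := arcosh (A - B * cosh ν)

/-- `-ĝ'`; the saddle-point equation reads `saddleSlope A B (ν θ) = tan θ`. -/
noncomputable def saddleSlope (A B ν : ℝ) : ℝ := B * sinh ν / sinh (gHat A B ν)

section Profile

variable {A B ν : ℝ}

theorem cosh_gHat (hy : 1 < A - B * cosh ν) : cosh (gHat A B ν) = A - B * cosh ν :=
  cosh_arcosh hy.le

theorem sinh_gHat_pos (hy : 1 < A - B * cosh ν) : 0 < sinh (gHat A B ν) :=
  sinh_pos_iff.2 (arcosh_pos hy)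

theorem hasDerivAt_gHat (hy : 1 < A - B * cosh ν) :
    HasDerivAt (gHat A B) (-saddleSlope A B ν) ν := by
  refine ((hasDerivAt_arcosh hy).comp ν
    (((hasDerivAt_cosh ν).const_mul B).const_sub A)).congr_deriv ?_
  rw [saddleSlope, gHat, sinh_arcosh hy.le]
  ring

theorem hasDerivAt_saddleSlope (hy : 1 < A - B * cosh ν) :
    HasDerivAt (saddleSlope A B)
      ((B * cosh ν * sinh (gHat A B ν) + B * sinh ν * ((A - B * cosh ν) * saddleSlope A B ν)) /
        sinh (gHat A B ν) ^ 2) ν := by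
  refine (((hasDerivAt_sinh ν).const_mul B).div ((hasDerivAt_sinh _).comp ν (hasDerivAt_gHat hy))
    (sinh_gHat_pos hy).ne').congr_deriv ?_
  rw [Function.comp_apply, cosh_gHat hy]
  ring

theorem saddleSlope_pos (hB : 0 < B) (hν : 0 < ν) (hy : 1 < A - B * cosh ν) :
    0 < saddleSlope A B ν :=
  div_pos (mul_pos hB (sinh_pos_iff.2 hν)) (sinh_gHat_pos hy)

theorem deriv_saddleSlope_pos (hB : 0 < B) (hν : 0 < ν) (hy : 1 < A - B * cosh ν) :
    0 < deriv (saddleSlope A B) ν := by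
  rw [(hasDerivAt_saddleSlope hy).deriv]
  have := sinh_gHat_pos hy
  have := sinh_pos_iff.2 hν
  have := saddleSlope_pos hB hν hy
  have : 0 < A - B * cosh ν := by linarith
  positivity

theorem saddleSlope_eq_of_mul_sinh_eq {t : ℝ} (hB : 0 < B) (hy : 1 < A - B * cosh ν) (ht : 0 < t)
    (h : B * sinh ν = t * sinh (gHat A B ν)) : 0 < ν ∧ saddleSlope A B ν = t := by
  have hs := sinh_gHat_pos hy
  refine ⟨sinh_pos_iff.1 (pos_of_mul_pos_right (h ▸ mul_pos ht hs) hB.le), ?_⟩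
  rw [saddleSlope, h, mul_div_cancel_right₀ _ hs.ne']

theorem deriv_deriv_eq_of_eqOn_gHat {g : ℝ → ℝ} {U : Set ℝ} (hU : IsOpen U)
    (hy : ∀ ν ∈ U, 1 < A - B * cosh ν) (hg : EqOn g (gHat A B) U) (hν : ν ∈ U) :
    deriv (deriv g) ν = -deriv (saddleSlope A B) ν := by
  have : deriv g =ᶠ[𝓝 ν] fun x => -saddleSlope A B x :=
    eventuallyEq_of_mem (hU.mem_nhds hν) fun x hx => by
      rw [(eventuallyEq_of_mem (hU.mem_nhds hx) hg).deriv_eq, (hasDerivAt_gHat (hy x hx)).deriv]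
  rw [this.deriv_eq, deriv.fun_neg]

end Profile

section Region

variable {A B ν₀ : ℝ}

theorem one_lt_sub_mul_cosh {ν : ℝ} (hB : 0 < B) (hν₀ : cosh ν₀ = (A - 1) / B)
    (hν : ν ∈ Ico 0 ν₀) : 1 < A - B * cosh ν := by
  have : cosh ν < cosh ν₀ := cosh_lt_cosh.2 <| by
    rw [abs_of_nonneg hν.1, abs_of_pos (hν.1.trans_lt hν.2)]
    exact hν.2
  rw [hν₀, lt_div_iff₀ hB] at this
  linarith

theorem strictMonoOn_saddleSlope (hB : 0 < B) (hν₀ : cosh ν₀ = (A - 1) / B) :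
    StrictMonoOn (saddleSlope A B) (Ioo 0 ν₀) := by
  have hy : ∀ x ∈ Ioo 0 ν₀, 1 < A - B * cosh x := fun x hx =>
    one_lt_sub_mul_cosh hB hν₀ (Ioo_subset_Ico_self hx)
  refine strictMonoOn_of_deriv_pos (convex_Ioo 0 ν₀)
    (fun x hx => (hasDerivAt_saddleSlope (hy x hx)).continuousAt.continuousWithinAt) ?_
  rw [interior_Ioo]
  exact fun x hx => deriv_saddleSlope_pos hB hx.1 (hy x hx)

theorem hasDerivAt_saddlePoint {nu : ℝ → ℝ} {θ : ℝ} (hB : 0 < B) (hν₀ : cosh ν₀ = (A - 1) / B)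
    (hnu : ∀ θ ∈ Ioo 0 (π / 2), nu θ ∈ Ioo 0 ν₀ ∧ saddleSlope A B (nu θ) = tan θ)
    (hθ : θ ∈ Ioo 0 (π / 2)) :
    HasDerivAt nu (1 / (deriv (saddleSlope A B) (nu θ) * cos θ ^ 2)) θ := by
  have hy : ∀ x ∈ Ioo 0 ν₀, 1 < A - B * cosh x := fun x hx =>
    one_lt_sub_mul_cosh hB hν₀ (Ioo_subset_Ico_self hx)
  have hmono := strictMonoOn_saddleSlope hB hν₀
  have hsurj : Ioo 0 ν₀ ⊆ nu '' Ioo 0 (π / 2) := by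
    intro x hx
    have hθx : arctan (saddleSlope A B x) ∈ Ioo 0 (π / 2) :=
      ⟨arctan_pos.2 (saddleSlope_pos hB hx.1 (hy x hx)), arctan_lt_pi_div_two _⟩
    refine ⟨_, hθx, hmono.injOn (hnu _ hθx).1 hx ?_⟩
    rw [(hnu _ hθx).2, tan_arctan]
  have hcont : ContinuousOn nu (Ioo 0 (π / 2)) :=
    continuousOn_of_leftInvOn_of_strictMonoOn (f := arctan ∘ saddleSlope A B) isOpen_Ioo
      isOpen_Ioo (arctan_strictMono.comp_strictMonoOn hmono) (fun θ hθ => (hnu θ hθ).1) hsurj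
      fun θ hθ => by
        rw [Function.comp_apply, (hnu θ hθ).2, arctan_tan (by linarith [pi_pos, hθ.1]) hθ.2]
  obtain ⟨hmem, -⟩ := hnu θ hθ
  exact hasDerivAt_of_comp_eq_tan (hcont.continuousAt (isOpen_Ioo.mem_nhds hθ))
    (hasDerivAt_saddleSlope (hy _ hmem)).differentiableAt.hasDerivAt
    (deriv_saddleSlope_pos hB hmem.1 (hy _ hmem)).ne' ⟨by linarith [pi_pos, hθ.1], hθ.2⟩
    (eventually_of_mem (isOpen_Ioo.mem_nhds hθ) fun θ hθ => (hnu θ hθ).2)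

end Region

theorem statement6_general
    (K2 K1s : ℝ)
    (hK2 : 0 < K2) (hK1s : 0 < K1s)
    (A B : ℝ)
    (hB : B = Real.sinh (2 * K1s) * Real.sinh (2 * K2))
    (ν₀ : ℝ)
    (hν₀ : Real.cosh ν₀ = (A - 1) / B)
    (g : ℝ → ℝ)
    (hg : ∀ ν ∈ Set.Icc (0 : ℝ) ν₀,
      0 ≤ g ν ∧ Real.cosh (g ν) = A - B * Real.cosh ν)
    (nu : ℝ → ℝ)
    (hnu : ∀ θ ∈ Set.Ico (0 : ℝ) (π / 2),
      nu θ ∈ Set.Ico (0 : ℝ) ν₀ ∧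
      B * Real.sinh (nu θ) = Real.tan θ * Real.sinh (g (nu θ)))
    (tau : ℝ → ℝ)
    (htau : ∀ θ, tau θ = Real.cos θ * g (nu θ) + Real.sin θ * nu θ) :
    ∀ θ ∈ Set.Ioo (0 : ℝ) (π / 2),
      DifferentiableAt ℝ tau θ ∧
      DifferentiableAt ℝ (deriv tau) θ ∧
      tau θ + deriv (deriv tau) θ =
        (1 / Real.cos θ) ^ 3 / (-(deriv (deriv g) (nu θ))) ∧
      0 < tau θ + deriv (deriv tau) θ := by
  have hB0 : 0 < B := hB ▸ mul_pos (sinh_pos_iff.2 (by positivity)) (sinh_pos_iff.2 (by positivity))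
  have hy : ∀ ν ∈ Ico 0 ν₀, 1 < A - B * cosh ν := fun ν hν => one_lt_sub_mul_cosh hB0 hν₀ hν
  have hgU : EqOn g (gHat A B) (Ico 0 ν₀) := fun ν hν => by
    obtain ⟨hg0, hcosh⟩ := hg ν (Ico_subset_Icc_self hν)
    rw [gHat, ← hcosh, arcosh_cosh hg0]
  have hsaddle : ∀ θ ∈ Ioo 0 (π / 2), nu θ ∈ Ioo 0 ν₀ ∧ saddleSlope A B (nu θ) = tan θ := by
    intro θ hθ
    obtain ⟨hmem, heq⟩ := hnu θ (Ioo_subset_Ico_self hθ)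
    rw [hgU hmem] at heq
    obtain ⟨hpos, hslope⟩ := saddleSlope_eq_of_mul_sinh_eq hB0 (hy _ hmem)
      (tan_pos_of_pos_of_lt_pi_div_two hθ.1 hθ.2) heq
    exact ⟨⟨hpos, hmem.2⟩, hslope⟩
  have hy' : ∀ θ ∈ Ioo 0 (π / 2), 1 < A - B * cosh (nu θ) := fun θ hθ =>
    hy _ (Ioo_subset_Ico_self (hsaddle θ hθ).1)
  have hcos : ∀ θ ∈ Ioo 0 (π / 2), 0 < cos θ := fun θ hθ =>
    cos_pos_of_mem_Ioo ⟨by linarith [pi_pos, hθ.1], hθ.2⟩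
  intro θ hθ
  obtain ⟨hτ', hτ''⟩ := hasDerivAt_deriv_of_eqOn_envelope (τ := tau) isOpen_Ioo
    (fun θ hθ => (hcos θ hθ).ne') (fun θ hθ => (hsaddle θ hθ).2 ▸ hasDerivAt_gHat (hy' θ hθ))
    (fun θ hθ => hasDerivAt_saddlePoint hB0 hν₀ hsaddle hθ)
    (fun θ hθ => by rw [htau, hgU (Ioo_subset_Ico_self (hsaddle θ hθ).1)]) hθ
  have hg'' := deriv_deriv_eq_of_eqOn_gHat isOpen_Ioo (fun ν hν => hy ν (Ioo_subset_Ico_self hν))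
    (hgU.mono Ioo_subset_Ico_self) (hsaddle θ hθ).1
  have := deriv_saddleSlope_pos hB0 (hsaddle θ hθ).1.1 (hy' θ hθ)
  have := hcos θ hθ
  refine ⟨hτ'.differentiableAt, hτ''.differentiableAt, ?_, ?_⟩ <;>
    rw [hτ''.deriv, add_neg_cancel_left]
  · rw [hg'', neg_neg]
    field_simp
  · positivity

/-- The surface stiffness is strictly positive and given by an
explicit formula: for every `θ ∈ (0, π/2)`, `τ` is twice differentiable at `θ`
and `τ(θ) + τ″(θ) = sec³θ / (−ĝ″(ν(θ))) > 0`. -/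
theorem statement6
    (K1 K2 K1s : ℝ)
    (hK1 : 0 < K1) (hK2 : 0 < K2) (hK1s : 0 < K1s)
    (hdual : Real.exp (2 * K1s) = Real.cosh K1 / Real.sinh K1)
    (hlow : K1s < K2)
    (A B : ℝ)
    (hA : A = Real.cosh (2 * K1s) * Real.cosh (2 * K2))
    (hB : B = Real.sinh (2 * K1s) * Real.sinh (2 * K2))
    (ν₀ : ℝ) (hν₀pos : 0 < ν₀)
    (hν₀ : Real.cosh ν₀ = (A - 1) / B)
    (g : ℝ → ℝ)
    (hg : ∀ ν ∈ Set.Icc (0 : ℝ) ν₀,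
      0 ≤ g ν ∧ Real.cosh (g ν) = A - B * Real.cosh ν)
    (nu : ℝ → ℝ)
    (hnu : ∀ θ ∈ Set.Ico (0 : ℝ) (π / 2),
      nu θ ∈ Set.Ico (0 : ℝ) ν₀ ∧
      B * Real.sinh (nu θ) = Real.tan θ * Real.sinh (g (nu θ)))
    (tau : ℝ → ℝ)
    (htau : ∀ θ, tau θ = Real.cos θ * g (nu θ) + Real.sin θ * nu θ) :
    ∀ θ ∈ Set.Ioo (0 : ℝ) (π / 2),
      DifferentiableAt ℝ tau θ ∧
      DifferentiableAt ℝ (deriv tau) θ ∧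
      tau θ + deriv (deriv tau) θ =
        (1 / Real.cos θ) ^ 3 / (-(deriv (deriv g) (nu θ))) ∧
      0 < tau θ + deriv (deriv tau) θ :=
  statement6_general K2 K1s hK2 hK1s A B hB ν₀ hν₀ g hg nu hnu tau htau
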